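/- Let A be a finite nonempty set in an abelian group with E₃(A) > 0, and let D' be any subset of A - A. Then ∑_{d ∈ D'} |A_d| · |A + A_d| ≥ |A|² · (∑_{d ∈ D'} |A_d|^{3/2})² / E₃(A). -/

import Mathlib

/-!
For each `d`, Cauchy–Schwarz gives `|A|² |A_d|² ≤ |A + A_d| E(A, A_d)`, and the additive
quadruples of `A` and `A_d`, summed over `d`, inject into the sextuples counted by `E₃(A)`.
Writing `|A| |A_d|^{3/2} ≤ √(|A_d| |A + A_d|) √(E(A, A_d))` and applying Cauchy–Schwarz once more
over `d ∈ D'` gives `|A|² (∑ |A_d|^{3/2})² ≤ (∑ |A_d| |A + A_d|) E₃(A)`.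
-/

open Finset Pointwise

/-- Cubic energy of a finite set `A`. -/
def cubicEnergy {G : Type*} [AddCommGroup G] [DecidableEq G] (A : Finset G) : ℕ :=
  (((A ×ˢ A) ×ˢ (A ×ˢ A) ×ˢ (A ×ˢ A)).filter fun x =>
    x.1.1 - x.1.2 = x.2.1.1 - x.2.1.2 ∧ x.2.1.1 - x.2.1.2 = x.2.2.1 - x.2.2.2).card

lemma rpow_three_halves_sq {x : ℝ} (hx : 0 ≤ x) : (x ^ (3 / 2 : ℝ)) ^ 2 = x ^ 2 * x := by
  rw [← Real.rpow_mul_natCast hx]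
  norm_num [Real.rpow_natCast, pow_succ]

lemma sq_mul_sq_sum_rpow_three_halves_le {ι : Type*} (s : Finset ι) {c : ℝ} {r K e : ι → ℝ}
    (hc : 0 ≤ c) (hr : ∀ i, 0 ≤ r i) (hK : ∀ i, 0 ≤ K i) (he : ∀ i, 0 ≤ e i)
    (h : ∀ i ∈ s, c ^ 2 * r i ^ 2 ≤ K i * e i) :
    c ^ 2 * (∑ i ∈ s, r i ^ (3 / 2 : ℝ)) ^ 2 ≤ (∑ i ∈ s, r i * K i) * ∑ i ∈ s, e i := by
  have hrK i : 0 ≤ r i * K i := mul_nonneg (hr i) (hK i)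
  have hterm : ∀ i ∈ s, c * r i ^ (3 / 2 : ℝ) ≤ √(r i * K i) * √(e i) := fun i hi => by
    rw [← Real.sqrt_mul (hrK i)]
    refine Real.le_sqrt_of_sq_le ?_
    calc (c * r i ^ (3 / 2 : ℝ)) ^ 2 = c ^ 2 * r i ^ 2 * r i := by
          rw [mul_pow, rpow_three_halves_sq (hr i), mul_assoc]
      _ ≤ K i * e i * r i := mul_le_mul_of_nonneg_right (h i hi) (hr i)
      _ = r i * K i * e i := by ring
  have hsum : c * ∑ i ∈ s, r i ^ (3 / 2 : ℝ) ≤ √(∑ i ∈ s, r i * K i) * √(∑ i ∈ s, e i) := by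
    rw [mul_sum]
    exact (sum_le_sum hterm).trans (Real.sum_sqrt_mul_sqrt_le s hrK he)
  calc c ^ 2 * (∑ i ∈ s, r i ^ (3 / 2 : ℝ)) ^ 2 = (c * ∑ i ∈ s, r i ^ (3 / 2 : ℝ)) ^ 2 := by ring
    _ ≤ (√(∑ i ∈ s, r i * K i) * √(∑ i ∈ s, e i)) ^ 2 :=
      pow_le_pow_left₀ (mul_nonneg hc (sum_nonneg fun i _ => Real.rpow_nonneg (hr i) _)) hsum 2
    _ = (∑ i ∈ s, r i * K i) * ∑ i ∈ s, e i := by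
      rw [mul_pow, Real.sq_sqrt (sum_nonneg fun i _ => hrK i),
        Real.sq_sqrt (sum_nonneg fun i _ => he i)]

/-- `(a₁, a₂, b₁, b₂) ↦ (a₁, a₂, b₂, b₁, b₂ + d, b₁ + d)` embeds the additive quadruples of
`A` and `A_d`, over all `d`, into the sextuples counted by `E₃(A)`. -/
lemma sum_addEnergy_filter_le_cubicEnergy {G : Type*} [AddCommGroup G] [DecidableEq G]
    (A D : Finset G) :
    ∑ d ∈ D, addEnergy A (A.filter fun a => a + d ∈ A) ≤ cubicEnergy A := by
  simp only [addEnergy]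
  rw [← card_sigma]
  refine card_le_card_of_injOn
    (fun x => ((x.2.1.1, x.2.1.2), (x.2.2.2, x.2.2.1), (x.2.2.2 + x.1, x.2.2.1 + x.1))) ?_ ?_
  · rintro ⟨d, ⟨a₁, a₂⟩, b₁, b₂⟩ hx
    simp only [mem_coe, mem_sigma, mem_filter, mem_product] at hx ⊢
    obtain ⟨-, ⟨⟨ha₁, ha₂⟩, ⟨hb₁, hb₁d⟩, hb₂, hb₂d⟩, hsum⟩ := hx
    refine ⟨⟨⟨ha₁, ha₂⟩, ⟨hb₂, hb₁⟩, hb₂d, hb₁d⟩, ?_, (add_sub_add_right_eq_sub _ _ _).symm⟩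
    rw [sub_eq_sub_iff_add_eq_add, hsum, add_comm]
  · rintro ⟨d, ⟨a₁, a₂⟩, b₁, b₂⟩ - ⟨d', ⟨a₁', a₂'⟩, b₁', b₂'⟩ - h
    simp only [Prod.mk.injEq] at h
    obtain ⟨⟨rfl, rfl⟩, ⟨rfl, rfl⟩, hd, -⟩ := h
    obtain rfl := add_left_cancel hd
    rfl

theorem sum_Ad_add_lower_bound_general {G : Type*} [AddCommGroup G] [DecidableEq G]
    (A : Finset G) (D' : Finset G) :
    (A.card : ℝ) ^ 2 *
        (∑ d ∈ D', ((A.filter fun a => a + d ∈ A).card : ℝ) ^ ((3 : ℝ) / 2)) ^ 2 /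
      (cubicEnergy A : ℝ) ≤
    ∑ d ∈ D', ((A.filter fun a => a + d ∈ A).card : ℝ) *
      ((A + A.filter fun a => a + d ∈ A).card : ℝ) := by
  have hEnergy : (∑ d ∈ D', (addEnergy A (A.filter fun a => a + d ∈ A) : ℝ)) ≤ cubicEnergy A := by
    exact_mod_cast sum_addEnergy_filter_le_cubicEnergy A D'
  have hCauchySchwarz : ∀ d ∈ D', (A.card : ℝ) ^ 2 * ((A.filter fun a => a + d ∈ A).card : ℝ) ^ 2 ≤
      ((A + A.filter fun a => a + d ∈ A).card : ℝ) * addEnergy A (A.filter fun a => a + d ∈ A) :=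
    fun d _ => by exact_mod_cast le_card_add_mul_addEnergy A _
  refine div_le_of_le_mul₀ (Nat.cast_nonneg _) (sum_nonneg fun d _ => by positivity) ?_
  calc _ ≤ _ := sq_mul_sq_sum_rpow_three_halves_le D' (Nat.cast_nonneg _)
        (fun _ => Nat.cast_nonneg _) (fun _ => Nat.cast_nonneg _) (fun _ => Nat.cast_nonneg _)
        hCauchySchwarz
    _ ≤ _ := mul_le_mul_of_nonneg_left hEnergy (sum_nonneg fun d _ => by positivity)

theorem sum_Ad_add_lower_bound {G : Type*} [AddCommGroup G] [DecidableEq G]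
    (A : Finset G) (hA : A.Nonempty) (hE : 0 < cubicEnergy A)
    (D' : Finset G) (hD' : D' ⊆ A - A) :
    (A.card : ℝ) ^ 2 *
        (∑ d ∈ D', ((A.filter fun a => a + d ∈ A).card : ℝ) ^ ((3 : ℝ) / 2)) ^ 2 /
      (cubicEnergy A : ℝ) ≤
    ∑ d ∈ D', ((A.filter fun a => a + d ∈ A).card : ℝ) *
      ((A + A.filter fun a => a + d ∈ A).card : ℝ) :=
  sum_Ad_add_lower_bound_general A D'
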